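/- arXiv:2102.05551 — 2 statements merged into one kernel-verified Lean document; each statement's English description precedes it below -/
import Mathlib

section
/- For the averaged KS system on the invariant set Ω̄ = 0, the equilibrium point (Σ̄, Q̄) = (1, −1) of the planar system Σ̄′ = ½((Σ̄² − 1)(−2Q̄² − 3(γ−2)Q̄Σ̄ + 2)), Q̄′ = −½(Q̄² − 1)(3γ(Σ̄² − 1) + 2Σ̄(Q̄ − 3Σ̄) + 2) has linearization eigenvalues −6 and 3(γ − 2); in particular for 0 ≤ γ < 2 both eigenvalues are negative (the point is hyperbolic and linearly stable). -/
/-!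
`F₁` carries the factor `Σ̄² - 1` and `F₂` the factor `Q̄² - 1`. Hence `F₁ ≡ 0` on `Σ̄ = 1` and
`F₂ ≡ 0` on `Q̄ = -1`, so the Jacobian at `(1, -1)` is diagonal, and a diagonal entry is `2a · g a`
for a factorization `(x² - 1) · g x` at a root `a` of `x² = 1`. This gives the diagonal `3(γ - 2), -6`.
-/

open Matrix Module.End

theorem deriv_sq_sub_one_mul {g : ℝ → ℝ} {a : ℝ} (hg : DifferentiableAt ℝ g a) (ha : a ^ 2 = 1) :
    deriv (fun x => (x ^ 2 - 1) * g x) a = 2 * a * g a := by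
  have h := ((hasDerivAt_pow 2 a).sub_const 1).mul hg.hasDerivAt
  refine h.deriv.trans ?_
  rw [ha]
  ring

theorem KS_equilibrium_P3_eigenvalues_general
    (γ : ℝ)
    (F₁ F₂ : ℝ → ℝ → ℝ)
    (hF₁ : ∀ S Q, F₁ S Q = (1/2) * (S ^ 2 - 1) * (-2 * Q ^ 2 - 3 * (γ - 2) * Q * S + 2))
    (hF₂ : ∀ S Q, F₂ S Q =
      -(1/2) * (Q ^ 2 - 1) * (3 * γ * (S ^ 2 - 1) + 2 * S * (Q - 3 * S) + 2))
    (J : Matrix (Fin 2) (Fin 2) ℝ)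
    (hJ : J = !![deriv (fun S => F₁ S (-1)) 1, deriv (fun Q => F₁ 1 Q) (-1);
                 deriv (fun S => F₂ S (-1)) 1, deriv (fun Q => F₂ 1 Q) (-1)]) :
    (F₁ 1 (-1) = 0 ∧ F₂ 1 (-1) = 0) ∧
    Module.End.HasEigenvalue (Matrix.toLin' J) (-6) ∧
    Module.End.HasEigenvalue (Matrix.toLin' J) (3 * (γ - 2)) ∧
    (γ < 2 → (-6 : ℝ) < 0 ∧ 3 * (γ - 2) < 0) := by
  have hF₁_at_S_one : (fun Q => F₁ 1 Q) = 0 := by funext Q; simp [hF₁]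
  have hF₂_at_Q_neg_one : (fun S => F₂ S (-1)) = 0 := by funext S; simp [hF₂]
  have hF₁_at_Q_neg_one : (fun S => F₁ S (-1)) = fun S => (S ^ 2 - 1) * (3 * (γ - 2) / 2 * S) := by
    funext S; rw [hF₁]; ring
  have hF₂_at_S_one : (fun Q => F₂ 1 Q) = fun Q => (Q ^ 2 - 1) * (2 - Q) := by
    funext Q; rw [hF₂]; ring
  have hJ_diag : J = diagonal ![3 * (γ - 2), -6] := by
    rw [hJ, hF₁_at_S_one, hF₂_at_Q_neg_one, hF₁_at_Q_neg_one, hF₂_at_S_one, diagonal_vec2,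
      deriv_sq_sub_one_mul (by fun_prop) (by norm_num),
      deriv_sq_sub_one_mul (by fun_prop) (by norm_num)]
    norm_num
    ring
  refine ⟨⟨by simp [hF₁], by simp [hF₂]⟩, ?_, ?_, fun hγ => ⟨by norm_num, by linarith⟩⟩
  · rw [hJ_diag]; exact (hasEigenvalue_toLin'_diagonal_iff _).mpr ⟨1, rfl⟩
  · rw [hJ_diag]; exact (hasEigenvalue_toLin'_diagonal_iff _).mpr ⟨0, rfl⟩

/-- For the averaged Kantowski–Sachs system on the invariant set `Ω̄ = 0`, the equilibrium
point `(Σ̄, Q̄) = (1, −1)` of the planar system has linearization eigenvalues `−6` and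
`3(γ − 2)`; for `0 ≤ γ < 2` both eigenvalues are negative. -/
theorem KS_equilibrium_P3_eigenvalues
    (γ : ℝ) (hγ0 : 0 ≤ γ) (hγ2 : γ ≤ 2)
    (F₁ F₂ : ℝ → ℝ → ℝ)
    (hF₁ : ∀ S Q, F₁ S Q = (1/2) * (S ^ 2 - 1) * (-2 * Q ^ 2 - 3 * (γ - 2) * Q * S + 2))
    (hF₂ : ∀ S Q, F₂ S Q =
      -(1/2) * (Q ^ 2 - 1) * (3 * γ * (S ^ 2 - 1) + 2 * S * (Q - 3 * S) + 2))
    (J : Matrix (Fin 2) (Fin 2) ℝ)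
    (hJ : J = !![deriv (fun S => F₁ S (-1)) 1, deriv (fun Q => F₁ 1 Q) (-1);
                 deriv (fun S => F₂ S (-1)) 1, deriv (fun Q => F₂ 1 Q) (-1)]) :
    (F₁ 1 (-1) = 0 ∧ F₂ 1 (-1) = 0) ∧
    Module.End.HasEigenvalue (Matrix.toLin' J) (-6) ∧
    Module.End.HasEigenvalue (Matrix.toLin' J) (3 * (γ - 2)) ∧
    (γ < 2 → (-6 : ℝ) < 0 ∧ 3 * (γ - 2) < 0) :=
  KS_equilibrium_P3_eigenvalues_general γ F₁ F₂ hF₁ hF₂ J hJ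
end

section
/- For the planar vector field θ′ = ½ sin θ (3 Q̄ cos θ − 2Q̄² + 2), Q̄′ = ¼(Q̄² − 1)(−4Q̄ cos θ + 3 cos 2θ + 5), the point (θ, Q̄) = (π/2, 1) is an equilibrium whose Jacobian has eigenvalues −3/2 and 1, hence it is a hyperbolic saddle. -/
/-! The line `Q̄ = 1` is invariant (`Q̄′` vanishes on it), so the Jacobian at `(π/2, 1)` is upper
triangular and its eigenvalues are its diagonal entries `∂θ θ′ = -3/2` and `∂Q̄ Q̄′ = 1`. -/

open Real Polynomial

theorem Matrix.IsUpperTriangular.hasEigenvalue_toLin'_diag {R n : Type*} [CommRing R] [IsDomain R]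
    [Fintype n] [DecidableEq n] [LinearOrder n] {A : Matrix n n R} (hA : A.IsUpperTriangular)
    (i : n) : Module.End.HasEigenvalue (Matrix.toLin' A) (A i i) := by
  rw [Module.End.hasEigenvalue_iff_isRoot_charpoly, Matrix.charpoly_toLin',
    A.charpoly_of_isUpperTriangular hA, IsRoot, eval_prod]
  exact Finset.prod_eq_zero (Finset.mem_univ i) (by simp)

theorem Matrix.isUpperTriangular_fin_two {R : Type*} [Zero R] (a b d : R) :
    (!![a, b; 0, d] : Matrix (Fin 2) (Fin 2) R).IsUpperTriangular := by
  intro i j hji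
  fin_cases i <;> fin_cases j <;> simp_all

noncomputable section

namespace KantowskiSachs

def thetaDot (θ Q : ℝ) : ℝ := 1 / 2 * sin θ * (3 * Q * cos θ - 2 * Q ^ 2 + 2)

def qDot (θ Q : ℝ) : ℝ := 1 / 4 * (Q ^ 2 - 1) * (-4 * Q * cos θ + 3 * cos (2 * θ) + 5)

theorem thetaDot_one (θ : ℝ) : thetaDot θ 1 = 3 / 4 * sin (2 * θ) := by
  rw [thetaDot, sin_two_mul]; ring

theorem thetaDot_pi_div_two (Q : ℝ) : thetaDot (π / 2) Q = 1 - Q ^ 2 := by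
  rw [thetaDot, sin_pi_div_two, cos_pi_div_two]; ring

theorem qDot_one (θ : ℝ) : qDot θ 1 = 0 := by
  rw [qDot]; ring

theorem qDot_pi_div_two (Q : ℝ) : qDot (π / 2) Q = (Q ^ 2 - 1) / 2 := by
  rw [qDot, mul_div_cancel₀ π two_ne_zero, cos_pi, cos_pi_div_two]; ring

theorem jacobian_at_pi_div_two_one :
    !![deriv (fun θ => thetaDot θ 1) (π / 2), deriv (fun Q => thetaDot (π / 2) Q) 1;
       deriv (fun θ => qDot θ 1) (π / 2), deriv (fun Q => qDot (π / 2) Q) 1] =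
      !![-(3 / 2), -2; 0, 1] := by
  have h_sin : HasDerivAt (fun θ => sin (2 * θ)) (-2) (π / 2) := by
    simpa [mul_div_cancel₀] using ((hasDerivAt_id (π / 2)).const_mul 2).sin
  norm_num [thetaDot_one, thetaDot_pi_div_two, qDot_one, qDot_pi_div_two, h_sin.deriv]

end KantowskiSachs

end

open KantowskiSachs in
/-- For the planar vector field `θ′ = ½ sin θ (3Q̄ cos θ − 2Q̄² + 2)`,
`Q̄′ = ¼(Q̄² − 1)(−4Q̄ cos θ + 3 cos 2θ + 5)`, the point `(θ, Q̄) = (π/2, 1)` is an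
equilibrium whose Jacobian has eigenvalues `−3/2` and `1`, hence a hyperbolic saddle. -/
theorem KS_vacuum_boundary_saddle
    (G₁ G₂ : ℝ → ℝ → ℝ)
    (hG₁ : ∀ θ Q, G₁ θ Q = (1/2) * Real.sin θ * (3 * Q * Real.cos θ - 2 * Q ^ 2 + 2))
    (hG₂ : ∀ θ Q, G₂ θ Q =
      (1/4) * (Q ^ 2 - 1) * (-4 * Q * Real.cos θ + 3 * Real.cos (2 * θ) + 5))
    (J : Matrix (Fin 2) (Fin 2) ℝ)
    (hJ : J = !![deriv (fun θ => G₁ θ 1) (Real.pi / 2), deriv (fun Q => G₁ (Real.pi / 2) Q) 1;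
                 deriv (fun θ => G₂ θ 1) (Real.pi / 2), deriv (fun Q => G₂ (Real.pi / 2) Q) 1]) :
    (G₁ (Real.pi / 2) 1 = 0 ∧ G₂ (Real.pi / 2) 1 = 0) ∧
    Module.End.HasEigenvalue (Matrix.toLin' J) (-(3/2)) ∧
    Module.End.HasEigenvalue (Matrix.toLin' J) 1 ∧
    (-(3/2) : ℝ) < 0 ∧ (0:ℝ) < 1 := by
  obtain rfl : G₁ = thetaDot := funext₂ hG₁
  obtain rfl : G₂ = qDot := funext₂ hG₂
  rw [jacobian_at_pi_div_two_one] at hJ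
  have hJ_upper : J.IsUpperTriangular := hJ ▸ Matrix.isUpperTriangular_fin_two _ _ _
  refine ⟨⟨?_, qDot_one _⟩, ?_, ?_, by norm_num, one_pos⟩
  · rw [thetaDot_pi_div_two]; norm_num
  · simpa [hJ] using hJ_upper.hasEigenvalue_toLin'_diag 0
  · simpa [hJ] using hJ_upper.hasEigenvalue_toLin'_diag 1
end
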